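/- For every n ≥ 0 (with the convention e_0 = 0), the Yule–Harding mean number of root configurations satisfies e_n ≤ (9/10)·(3/2)^n. -/
import Mathlib


/-- Plane binary trees: a leaf, or an ordered pair of plane binary trees. -/
inductive PTree : Type where
  | leaf : PTree
  | node : PTree → PTree → PTree
deriving DecidableEq

namespace PTree

/-- Number of leaves of a plane binary tree. -/
def leaves : PTree → ℕ
  | leaf => 1
  | node l r => leaves l + leaves r

/-- Number of root ancestral configurations:
`c(leaf) = 0`, `c(node l r) = (c l + 1) * (c r + 1)`. -/
def c : PTree → ℕ
  | leaf => 0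
  | node l r => (c l + 1) * (c r + 1)

/-- The finite set of plane binary trees with `n` leaves. -/
def trees : ℕ → Finset PTree
  | 0 => ∅
  | 1 => {leaf}
  | (n+2) =>
      (Finset.Icc 1 (n+1)).attach.biUnion fun j =>
        ((trees j.1) ×ˢ (trees (n+2-j.1))).image fun p => node p.1 p.2
decreasing_by
  · have h := Finset.mem_Icc.mp j.2; omega
  · have h := Finset.mem_Icc.mp j.2; omega

end PTree

namespace PTree

/-- Yule–Harding weight: `w(leaf) = 1`,
`w(node l r) = w l * w r / (leaves l + leaves r - 1)`. -/
def w : PTree → ℚ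
  | leaf => 1
  | node l r => w l * w r / ((leaves l + leaves r - 1 : ℕ) : ℚ)

end PTree

namespace PTree

/-- Yule–Harding mean number of root configurations (`e 0 = 0` since `trees 0 = ∅`). -/
def e (n : ℕ) : ℚ := ∑ t ∈ trees n, w t * (c t : ℚ)

end PTree

namespace PTree

lemma leaves_mem : ∀ n, ∀ t ∈ trees n, leaves t = n := by
  intro n
  induction n using Nat.strong_induction_on with
  | _ n ih =>
    match n with
    | 0 => simp [trees]
    | 1 => intro t ht; simp [trees] at ht; subst ht; rfl
    | (m+2) =>
      intro t ht
      rw [trees] at ht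
      simp only [Finset.mem_biUnion, Finset.mem_attach, Finset.mem_image,
        Finset.mem_product, true_and] at ht
      obtain ⟨⟨j, hj⟩, ⟨l, r⟩, ⟨hl, hr⟩, rfl⟩ := ht
      have hj' := Finset.mem_Icc.mp hj
      have h1 : leaves l = j := ih j (by omega) l hl
      have h2 : leaves r = m + 2 - j := ih (m + 2 - j) (by omega) r hr
      simp only [leaves, h1, h2]
      omega

lemma sum_trees (F : PTree → ℚ) (n : ℕ) :
    ∑ t ∈ trees (n+2), F t
      = ∑ j ∈ Finset.Icc 1 (n+1), ∑ l ∈ trees j, ∑ r ∈ trees (n+2-j), F (node l r) := by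
  rw [trees, Finset.sum_biUnion]
  · rw [← Finset.sum_attach (Finset.Icc 1 (n+1))
      (fun j => ∑ l ∈ trees j, ∑ r ∈ trees (n+2-j), F (node l r))]
    refine Finset.sum_congr rfl fun ⟨j, hj⟩ _ => ?_
    have hinj : ∀ p ∈ trees j ×ˢ trees (n+2-j), ∀ q ∈ trees j ×ˢ trees (n+2-j),
        node p.1 p.2 = node q.1 q.2 → p = q := by
      intro p _ q _ h
      injection h with h1 h2
      exact Prod.ext h1 h2
    rw [Finset.sum_image hinj, Finset.sum_product]
  · intro ⟨j, hj⟩ _ ⟨k, hk⟩ _ hne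
    apply Finset.disjoint_left.mpr
    intro t ht1 ht2
    simp only [Finset.mem_image, Finset.mem_product] at ht1 ht2
    obtain ⟨⟨l, r⟩, ⟨hl, -⟩, rfl⟩ := ht1
    obtain ⟨⟨l', r'⟩, ⟨hl', -⟩, h⟩ := ht2
    injection h with h1 h2
    have h1' : l' = l := h1
    have hjk : k = j := by
      rw [← leaves_mem j l hl, ← leaves_mem k l' hl', h1']
    exact hne (by simp [hjk])

lemma w_nonneg : ∀ t, 0 ≤ w t := by
  intro t
  induction t with
  | leaf => simp [w]
  | node l r hl hr =>
    rw [w]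
    exact div_nonneg (mul_nonneg hl hr) (Nat.cast_nonneg _)

lemma e_nonneg (n : ℕ) : 0 ≤ e n :=
  Finset.sum_nonneg fun t _ => mul_nonneg (w_nonneg t) (Nat.cast_nonneg _)

def W (n : ℕ) : ℚ := ∑ t ∈ trees n, w t

lemma W_eq_one : ∀ n, 1 ≤ n → W n = 1 := by
  intro n
  induction n using Nat.strong_induction_on with
  | _ n ih =>
    match n with
    | 0 => intro h; omega
    | 1 => intro _; simp [W, trees, w]
    | (m+2) =>
      intro _
      have key : ∀ j ∈ Finset.Icc 1 (m+1),
          (∑ l ∈ trees j, ∑ r ∈ trees (m+2-j), w (node l r)) = 1 / (m+1 : ℚ) := by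
        intro j hj
        have hj' := Finset.mem_Icc.mp hj
        have step : ∀ l ∈ trees j, (∑ r ∈ trees (m+2-j), w (node l r))
            = w l * W (m+2-j) / (m+1 : ℚ) := by
          intro l hl
          have hll : leaves l = j := leaves_mem j l hl
          rw [W, Finset.mul_sum, Finset.sum_div]
          refine Finset.sum_congr rfl fun r hr => ?_
          have hrr : leaves r = m+2-j := leaves_mem _ r hr
          have hnum : leaves l + leaves r - 1 = m+1 := by omega
          rw [w, hnum]
          push_cast
          ring
        rw [Finset.sum_congr rfl step]
        have h1 : W j = 1 := ih j (by omega) (by omega)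
        have h2 : W (m+2-j) = 1 := ih (m+2-j) (by omega) (by omega)
        rw [← Finset.sum_div, ← Finset.sum_mul, ← W, h1, h2]
        ring
      have : W (m+2) = ∑ j ∈ Finset.Icc 1 (m+1), (1 / (m+1 : ℚ)) := by
        rw [W, sum_trees]
        exact Finset.sum_congr rfl key
      rw [this, Finset.sum_const, Nat.card_Icc]
      simp
      field_simp

lemma sum_wc (n : ℕ) (hn : 1 ≤ n) :
    ∑ t ∈ trees n, w t * ((c t : ℚ) + 1) = e n + 1 := by
  have : ∑ t ∈ trees n, w t * ((c t : ℚ) + 1)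
      = ∑ t ∈ trees n, (w t * (c t : ℚ) + w t) := by
    refine Finset.sum_congr rfl fun t _ => by ring
  rw [this, Finset.sum_add_distrib, ← e, ← W, W_eq_one n hn]

lemma e_rec (n : ℕ) :
    e (n+2) = (∑ j ∈ Finset.Icc 1 (n+1), (e j + 1) * (e (n+2-j) + 1)) / (n+1 : ℚ) := by
  have key : ∀ j ∈ Finset.Icc 1 (n+1),
      (∑ l ∈ trees j, ∑ r ∈ trees (n+2-j), w (node l r) * (c (node l r) : ℚ))
        = (e j + 1) * (e (n+2-j) + 1) / (n+1 : ℚ) := by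
    intro j hj
    have hj' := Finset.mem_Icc.mp hj
    have step : ∀ l ∈ trees j, (∑ r ∈ trees (n+2-j), w (node l r) * (c (node l r) : ℚ))
        = (w l * ((c l : ℚ) + 1)) * (e (n+2-j) + 1) / (n+1 : ℚ) := by
      intro l hl
      have hll : leaves l = j := leaves_mem j l hl
      have inner : ∀ r ∈ trees (n+2-j), w (node l r) * (c (node l r) : ℚ)
          = (w l * ((c l : ℚ) + 1)) * (w r * ((c r : ℚ) + 1)) / (n+1 : ℚ) := by
        intro r hr
        have hrr : leaves r = n+2-j := leaves_mem _ r hr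
        have hnum : leaves l + leaves r - 1 = n+1 := by omega
        rw [w, c, hnum]
        push_cast
        ring
      rw [Finset.sum_congr rfl inner, ← Finset.sum_div, ← Finset.mul_sum,
        sum_wc (n+2-j) (by omega)]
    rw [Finset.sum_congr rfl step]
    rw [← Finset.sum_div, ← Finset.sum_mul, sum_wc j (by omega)]
  rw [e, sum_trees, Finset.sum_congr rfl key, Finset.sum_div]

lemma e0 : e 0 = 0 := by simp [e, trees]

lemma e1 : e 1 = 0 := by simp [e, trees, c]

lemma e2 : e 2 = 1 := by
  have h := e_rec 0
  norm_num [Finset.Icc_self, e1] at h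
  exact h

lemma e3 : e 3 = 2 := by
  have h := e_rec 1
  rw [show Finset.Icc 1 2 = {1, 2} by decide] at h
  norm_num [Finset.sum_insert, e1, e2] at h
  exact h

lemma e4 : e 4 = 10/3 := by
  have h := e_rec 2
  rw [show Finset.Icc 1 3 = {1, 2, 3} by decide] at h
  norm_num [Finset.sum_insert, e1, e2, e3] at h
  linarith

lemma e5 : e 5 = 31/6 := by
  have h := e_rec 3
  rw [show Finset.Icc 1 4 = {1, 2, 3, 4} by decide] at h
  norm_num [Finset.sum_insert, e1, e2, e3, e4] at h
  linarith

lemma key : ∀ n, 1 ≤ n → e n + 1 ≤ (9/10 : ℚ) * (3/2 : ℚ) ^ n := by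
  intro n
  induction n using Nat.strong_induction_on with
  | _ n ih =>
    match n with
    | 0 => intro h; exact absurd h (by omega)
    | 1 => intro _; rw [e1]; norm_num
    | 2 => intro _; rw [e2]; norm_num
    | 3 => intro _; rw [e3]; norm_num
    | 4 => intro _; rw [e4]; norm_num
    | 5 => intro _; rw [e5]; norm_num
    | (m+6) =>
      intro _
      have hrec := e_rec (m+4)
      rw [show m+4+2 = m+6 by omega, show m+4+1 = m+5 by omega] at hrec
      have hS : ∀ j ∈ Finset.Icc 1 (m+5),
          (e j + 1) * (e (m+6-j) + 1) ≤ (81/100 : ℚ) * (3/2 : ℚ) ^ (m+6) := by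
        intro j hj
        have hj' := Finset.mem_Icc.mp hj
        have h1 := ih j (by omega) (by omega)
        have h2 := ih (m+6-j) (by omega) (by omega)
        have p2 : (0:ℚ) ≤ e (m+6-j) + 1 := by have := e_nonneg (m+6-j); linarith
        calc (e j + 1) * (e (m+6-j) + 1)
            ≤ ((9/10:ℚ) * (3/2:ℚ)^j) * ((9/10:ℚ) * (3/2:ℚ)^(m+6-j)) :=
              mul_le_mul h1 h2 p2 (by positivity)
          _ = (81/100:ℚ) * ((3/2:ℚ)^j * (3/2:ℚ)^(m+6-j)) := by ring
          _ = (81/100:ℚ) * (3/2:ℚ)^(m+6) := by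
              rw [← pow_add]
              congr 2
              omega
      have hSle : (∑ j ∈ Finset.Icc 1 (m+5), (e j + 1) * (e (m+6-j) + 1))
          ≤ ((m:ℚ)+5) * ((81/100:ℚ) * (3/2:ℚ)^(m+6)) := by
        calc _ ≤ ∑ _j ∈ Finset.Icc 1 (m+5), (81/100:ℚ) * (3/2:ℚ)^(m+6) :=
              Finset.sum_le_sum hS
          _ = ((m:ℚ)+5) * ((81/100:ℚ) * (3/2:ℚ)^(m+6)) := by
              rw [Finset.sum_const, Nat.card_Icc]
              push_cast
              ring_nf
      have hpos : (0:ℚ) < (m:ℚ) + 5 := by positivity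
      have he : e (m+6) ≤ (81/100:ℚ) * (3/2:ℚ)^(m+6) := by
        rw [hrec]
        rw [show ((m+4 : ℕ):ℚ) + 1 = (m:ℚ) + 5 by push_cast; ring]
        rw [div_le_iff₀ hpos]
        linarith
      have hl6 : (729/64 : ℚ) ≤ (3/2:ℚ)^(m+6) := by
        calc (729/64:ℚ) = (3/2:ℚ)^6 := by norm_num
          _ ≤ (3/2:ℚ)^(m+6) := by
              apply pow_le_pow_right₀ (by norm_num) (by omega)
      linarith

end PTree

/-- For every `n ≥ 0` (with `e 0 = 0`), the Yule–Harding mean number of root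
configurations satisfies `e_n ≤ (9/10)·(3/2)^n`. -/
theorem e_bound : ∀ n : ℕ, PTree.e n ≤ (9 / 10 : ℚ) * (3 / 2 : ℚ) ^ n := by
  intro n
  match n with
  | 0 => rw [PTree.e0]; norm_num
  | (k+1) =>
    have h := PTree.key (k+1) (by omega)
    have : (0:ℚ) < (3/2:ℚ)^(k+1) := by positivity
    linarith
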